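/- arXiv:2310.13495 — 2 statements merged into one kernel-verified Lean document; each statement's English description precedes it below -/
import Mathlib

section
/- Let N be a flag-no-square simplicial complex, and let v, u be vertices of N whose graph distance in the 1-skeleton of N is at least 7, with φ: lk_v(N) → lk_u(N) a simplicial isomorphism between their links. Let h_φ(N) be the quotient of the subcomplex (N − v) − u obtained by identifying each vertex w of lk_v(N) with φ(w). Then every cycle of h_φ(N) formed by identifying the endpoints of an induced path in N from a vertex w ∈ lk_v(N) to φ(w) ∈ lk_u(N) has length at least 5; in particular, such identifications do not create induced 4-cycles. -/
/-- Key step for the star handle operation: let `G` be the 1-skeleton of a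
simplicial complex `N`, let `v, u` be vertices at graph distance at least 7,
and `φ` a map identifying the link of `v` with the link of `u` (so for a
neighbour `w` of `v`, `φ w` is a neighbour of `u`).  Then every induced path
in `N` from `w` to `φ w` has length at least 5; hence the cycles of
`h_φ(N)` created by the identification have length at least 5 and, in
particular, no induced 4-cycles are created. -/
theorem star_handle_paths_long {V : Type*} (G : SimpleGraph V) (v u : V)
    (φ : V → V) (hdist : 7 ≤ G.dist v u)
    (w : V) (hw : G.Adj v w) (hφw : G.Adj u (φ w)) :
    ∀ p : G.Walk w (φ w), p.IsPath → 5 ≤ p.length := by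
  intro p _
  have hle := G.dist_le (SimpleGraph.Walk.cons hw
    (p.append (SimpleGraph.Walk.cons hφw.symm SimpleGraph.Walk.nil)))
  simp [SimpleGraph.Walk.length_append] at hle
  omega
end

section
/- Let G be a graph on n vertices with no induced 4-cycle and no clique on 6 vertices. Then G has at most (5/√2)·n^{3/2} edges. -/
/-!
Let `G` be `K_{k+2}`-free without induced `C₄` (here `k = 4`). Each neighbourhood is
`K_{k+1}`-free, so by Turán's theorem a vertex of degree `d` sees at least `(d² - k d) / k`
ordered non-adjacent pairs inside its neighbourhood. On the other hand the common neighbours of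
a non-adjacent pair `x ≠ y` form a clique (any non-edge among them closes an induced `C₄`), and
together with `x` this clique lies in a `K_{k+2}`-free graph, so there are at most `k` of them.
Double counting the pairs gives `∑ d² ≤ k (k n² + 2 m)`, and Cauchy–Schwarz `(2m)² ≤ n ∑ d²`
together with `2 m ≤ n²` yields `4 m² ≤ (k² + k) n³`.
-/

open Finset

namespace SimpleGraph

variable {V : Type*} {G : SimpleGraph V}

def InducedC4Free (G : SimpleGraph V) : Prop :=
  ¬ ∃ a b c d : V, G.Adj a b ∧ G.Adj b c ∧ G.Adj c d ∧ G.Adj d a ∧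
    ¬ G.Adj a c ∧ ¬ G.Adj b d ∧ a ≠ c ∧ b ≠ d

theorem InducedC4Free.isClique_commonNeighbors (h : G.InducedC4Free) {x y : V} (hxy : x ≠ y)
    (hadj : ¬G.Adj x y) : G.IsClique (G.commonNeighbors x y) := by
  intro a ha b hb hab
  rw [mem_commonNeighbors] at ha hb
  by_contra hnab
  exact h ⟨x, a, y, b, ha.1, ha.2.symm, hb.2, hb.1.symm, hadj, hnab, hxy, hab⟩

theorem IsClique.card_le_of_cliqueFreeOn {s : Finset V} {t : Set V} {r : ℕ}
    (hs : G.IsClique (s : Set V)) (hst : (s : Set V) ⊆ t) (h : G.CliqueFreeOn t (r + 1)) :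
    #s ≤ r := by
  by_contra! hr
  obtain ⟨u, hus, hu⟩ := exists_subset_card_eq (show r + 1 ≤ #s from hr)
  exact h ((coe_subset.mpr hus).trans hst) ⟨hs.subset (coe_subset.mpr hus), hu⟩

theorem CliqueFree.cliqueFreeOn_neighborSet {n : ℕ} (h : G.CliqueFree (n + 1)) (v : V) :
    G.CliqueFreeOn (G.neighborSet v) n := by
  simpa using (h.cliqueFreeOn (s := Set.univ)).of_succ _ (Set.mem_univ v)

section DecidableAdj

variable [DecidableRel G.Adj]

theorem CliqueFree.two_mul_mul_card_edgeFinset_le [Fintype V] {r : ℕ}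
    (h : G.CliqueFree (r + 1)) : 2 * r * #G.edgeFinset ≤ (r - 1) * Fintype.card V ^ 2 := by
  rcases r.eq_zero_or_pos with rfl | hr
  · simp
  obtain ⟨H, _, hH⟩ := exists_isTuranMaximal (V := V) hr
  obtain ⟨e⟩ := (isTuranMaximal_iff_nonempty_iso_turanGraph hr).mp hH
  calc 2 * r * #G.edgeFinset ≤ 2 * r * #H.edgeFinset := Nat.mul_le_mul_left _ (hH.2 h)
    _ = 2 * r * #(turanGraph (Fintype.card V) r).edgeFinset := by rw [e.card_edgeFinset_eq]
    _ ≤ _ := mul_card_edgeFinset_turanGraph_le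

theorem card_filter_adj_offDiag_eq (s : Finset V) :
    #{p ∈ s.offDiag | G.Adj p.1 p.2} = 2 * #(G.induce (s : Set V)).edgeFinset := by
  rw [← dart_card_eq_twice_card_edges, ← card_univ]
  symm
  refine card_bij (fun d _ => (d.fst.1, d.snd.1)) ?_ ?_ ?_
  · intro d _
    simpa [d.adj.ne.symm, Subtype.val_injective.ne_iff] using d.adj
  · intro d₁ _ d₂ _ h
    simp only [Prod.mk.injEq] at h
    exact Dart.ext _ _ (Prod.ext (Subtype.ext h.1) (Subtype.ext h.2))
  · rintro ⟨x, y⟩ h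
    simp only [mem_filter, mem_offDiag] at h
    exact ⟨⟨(⟨x, h.1.1⟩, ⟨y, h.1.2.1⟩), h.2⟩, mem_univ _, rfl⟩

theorem CliqueFreeOn.mul_card_filter_adj_offDiag_le {s : Finset V} {r : ℕ}
    (h : G.CliqueFreeOn s (r + 1)) :
    r * #{p ∈ s.offDiag | G.Adj p.1 p.2} ≤ (r - 1) * #s ^ 2 := by
  have := ((cliqueFree_induce_iff ..).mpr h).two_mul_mul_card_edgeFinset_le
  rw [card_filter_adj_offDiag_eq]
  simpa [mul_assoc, mul_left_comm] using this

theorem CliqueFreeOn.sq_card_le {s : Finset V} {r : ℕ} (h : G.CliqueFreeOn s (r + 1)) :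
    #s ^ 2 ≤ r * (#{p ∈ s.offDiag | ¬G.Adj p.1 p.2} + #s) := by
  obtain _ | r := r
  · suffices s = ∅ by simp [this]
    refine eq_empty_of_forall_notMem fun x hx => h (t := {x}) (by simpa using hx) ?_
    exact isNClique_one.mpr ⟨x, rfl⟩
  have hsplit := card_filter_add_card_filter_not (s := s.offDiag) (fun p : V × V => G.Adj p.1 p.2)
  have hturan := h.mul_card_filter_adj_offDiag_le
  rw [offDiag_card] at hsplit
  have : #s ≤ #s * #s := Nat.le_mul_self _
  simp only [add_tsub_cancel_right] at hturan
  zify [this] at *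
  nlinarith

variable [Fintype V]

theorem two_mul_card_edgeFinset_le_sq : 2 * #G.edgeFinset ≤ Fintype.card V ^ 2 :=
  calc 2 * #G.edgeFinset ≤ 2 * (Fintype.card V).choose 2 :=
        Nat.mul_le_mul_left _ card_edgeFinset_le_card_choose_two
    _ ≤ Fintype.card V ^ 2 := by
        rw [Nat.choose_two_right, sq]
        exact (Nat.mul_div_le _ _).trans (Nat.mul_le_mul_left _ (Nat.sub_le _ _))

theorem card_inter_neighborFinset_le (hC4 : G.InducedC4Free) {k : ℕ} (hK : G.CliqueFree (k + 2))
    [DecidableEq V] {x y : V} (hxy : x ≠ y) (hadj : ¬G.Adj x y) :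
    #(G.neighborFinset x ∩ G.neighborFinset y) ≤ k := by
  refine IsClique.card_le_of_cliqueFreeOn ?_ ?_ (hK.cliqueFreeOn_neighborSet x)
  · simpa [commonNeighbors] using hC4.isClique_commonNeighbors hxy hadj
  · simp [Set.inter_subset_left]

theorem sum_card_filter_not_adj_offDiag_neighborFinset [DecidableEq V] :
    ∑ v, #{p ∈ (G.neighborFinset v).offDiag | ¬G.Adj p.1 p.2} =
      ∑ p ∈ {p ∈ univ.offDiag | ¬G.Adj p.1 p.2},
        #(G.neighborFinset p.1 ∩ G.neighborFinset p.2) := by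
  convert sum_card_bipartiteAbove_eq_sum_card_bipartiteBelow
    (r := fun v (p : V × V) => G.Adj v p.1 ∧ G.Adj v p.2) using 3 <;>
  · ext
    simp only [bipartiteAbove, bipartiteBelow, mem_filter, mem_offDiag, mem_univ,
      mem_neighborFinset, mem_inter, true_and]
    tauto

theorem sum_card_filter_not_adj_offDiag_neighborFinset_le (hC4 : G.InducedC4Free) {k : ℕ}
    (hK : G.CliqueFree (k + 2)) :
    ∑ v, #{p ∈ (G.neighborFinset v).offDiag | ¬G.Adj p.1 p.2} ≤ k * Fintype.card V ^ 2 := by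
  classical
  rw [sum_card_filter_not_adj_offDiag_neighborFinset]
  calc _ ≤ ∑ _p ∈ {p ∈ univ.offDiag | ¬G.Adj p.1 p.2}, k := by
        refine sum_le_sum fun p hp => ?_
        simp only [mem_filter, mem_offDiag] at hp
        exact card_inter_neighborFinset_le hC4 hK hp.1.2.2 hp.2
    _ ≤ ∑ _p : V × V, k := sum_le_sum_of_subset (subset_univ _)
    _ = k * Fintype.card V ^ 2 := by simp [sq, mul_comm]

theorem sum_degree_sq_le (hC4 : G.InducedC4Free) {k : ℕ} (hK : G.CliqueFree (k + 2)) :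
    ∑ v, G.degree v ^ 2 ≤ k * (k * Fintype.card V ^ 2 + 2 * #G.edgeFinset) :=
  calc ∑ v, G.degree v ^ 2
      ≤ ∑ v, k * (#{p ∈ (G.neighborFinset v).offDiag | ¬G.Adj p.1 p.2} + G.degree v) := by
        refine sum_le_sum fun v _ => ?_
        rw [← card_neighborFinset_eq_degree]
        exact CliqueFreeOn.sq_card_le (by simpa using hK.cliqueFreeOn_neighborSet v)
    _ = k * (∑ v, #{p ∈ (G.neighborFinset v).offDiag | ¬G.Adj p.1 p.2} +
          2 * #G.edgeFinset) := by
        rw [← mul_sum, sum_add_distrib, sum_degrees_eq_twice_card_edges]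
    _ ≤ k * (k * Fintype.card V ^ 2 + 2 * #G.edgeFinset) := by
        gcongr
        exact sum_card_filter_not_adj_offDiag_neighborFinset_le hC4 hK

theorem four_mul_sq_card_edgeFinset_le (hC4 : G.InducedC4Free) {k : ℕ}
    (hK : G.CliqueFree (k + 2)) :
    4 * #G.edgeFinset ^ 2 ≤ (k ^ 2 + k) * Fintype.card V ^ 3 := by
  have hcs : (2 * #G.edgeFinset) ^ 2 ≤ Fintype.card V * ∑ v, G.degree v ^ 2 := by
    simpa [sum_degrees_eq_twice_card_edges] using
      sq_sum_le_card_mul_sum_sq (s := univ) (f := fun v => G.degree v)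
  have hdeg := sum_degree_sq_le hC4 hK
  have hm := G.two_mul_card_edgeFinset_le_sq
  set n := Fintype.card V
  set m := #G.edgeFinset
  calc 4 * m ^ 2 = (2 * m) ^ 2 := by ring
    _ ≤ n * (k * (k * n ^ 2 + 2 * m)) := hcs.trans (Nat.mul_le_mul_left _ hdeg)
    _ ≤ n * (k * (k * n ^ 2 + n ^ 2)) := by gcongr
    _ = (k ^ 2 + k) * n ^ 3 := by ring

end DecidableAdj

end SimpleGraph

theorem edge_bound_of_no_induced_C4_cliqueFree_general
    {V : Type*} [Fintype V]
    (G : SimpleGraph V) [DecidableRel G.Adj]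
    (hC4 : ¬ ∃ a b c d : V, G.Adj a b ∧ G.Adj b c ∧ G.Adj c d ∧ G.Adj d a ∧
      ¬ G.Adj a c ∧ ¬ G.Adj b d ∧ a ≠ c ∧ b ≠ d)
    (hK6 : G.CliqueFree 6) :
    (G.edgeFinset.card : ℝ) ≤
      5 / Real.sqrt 2 * (Fintype.card V : ℝ) ^ (3 / 2 : ℝ) := by
  have hbound : 4 * (#G.edgeFinset : ℝ) ^ 2 ≤ 20 * (Fintype.card V : ℝ) ^ 3 := by
    exact_mod_cast SimpleGraph.four_mul_sq_card_edgeFinset_le (k := 4) hC4 hK6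
  have hrhs : (5 / Real.sqrt 2 * (Fintype.card V : ℝ) ^ (3 / 2 : ℝ)) ^ 2 =
      25 / 2 * (Fintype.card V : ℝ) ^ 3 := by
    rw [mul_pow, div_pow, Real.sq_sqrt zero_le_two,
      ← Real.rpow_natCast ((Fintype.card V : ℝ) ^ (3 / 2 : ℝ)) 2,
      ← Real.rpow_mul (Nat.cast_nonneg _)]
    norm_num
  refine le_of_pow_le_pow_left₀ two_ne_zero (by positivity) ?_
  rw [hrhs]
  nlinarith [pow_nonneg (Nat.cast_nonneg (α := ℝ) (Fintype.card V)) 3]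

/-- Gyárfás–Hubenko–Solymosi bound: a graph on `n` vertices with no induced
4-cycle and no clique on 6 vertices has at most `(5/√2)·n^{3/2}` edges. -/
theorem edge_bound_of_no_induced_C4_cliqueFree
    {V : Type*} [Fintype V] [DecidableEq V]
    (G : SimpleGraph V) [DecidableRel G.Adj]
    (hC4 : ¬ ∃ a b c d : V, G.Adj a b ∧ G.Adj b c ∧ G.Adj c d ∧ G.Adj d a ∧
      ¬ G.Adj a c ∧ ¬ G.Adj b d ∧ a ≠ c ∧ b ≠ d)
    (hK6 : G.CliqueFree 6) :
    (G.edgeFinset.card : ℝ) ≤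
      5 / Real.sqrt 2 * (Fintype.card V : ℝ) ^ (3 / 2 : ℝ) :=
  edge_bound_of_no_induced_C4_cliqueFree_general G hC4 hK6
end
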